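/- Let Θ : [0,∞) → [0,∞) be a continuous function such that the associated sequence M^Θ_p = sup_{t≥0} t^p e^{−Θ(t)} consists of positive finite real numbers and is quasi-analytic, i.e. ∑_{p≥1} M^Θ_{p−1}/M^Θ_p = +∞. Then for every T > 0 and every c ≥ 0, the sequence M^{TΘ+c}_p = sup_{t≥0} t^p e^{−(TΘ(t)+c)} also consists of positive finite real numbers and is quasi-analytic: ∑_{p≥1} M^{TΘ+c}_{p−1}/M^{TΘ+c}_p = +∞. -/

import Mathlib

open MeasureTheory Filter
open scoped ENNReal NNReal

noncomputable section

abbrev Esp (d : ℕ) := EuclideanSpace ℝ (Fin d)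

/-- Japanese bracket `⟨x⟩ = (1+‖x‖²)^{1/2}`. -/
def jap {d : ℕ} (x : Esp d) : ℝ := Real.sqrt (1 + ‖x‖ ^ 2)

/-- First-order partial derivative in direction `i`. -/
def pderivI {d : ℕ} (i : Fin d) (f : Esp d → ℂ) : Esp d → ℂ :=
  fun x => fderiv ℝ f x (EuclideanSpace.single i 1)

/-- Multi-index partial derivative `∂^β`. -/
def mderiv {d : ℕ} (β : Fin d → ℕ) (f : Esp d → ℂ) : Esp d → ℂ :=
  Fin.foldr d (fun i g => (pderivI i)^[β i] g) f

/-- `ρ` is a contraction mapping: `|ρ(x)-ρ(y)| ≤ L‖x-y‖` for some `0 ≤ L < 1`. -/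
def IsContractionMap {d : ℕ} (ρ : Esp d → ℝ) : Prop :=
  ∃ L : ℝ, 0 ≤ L ∧ L < 1 ∧ ∀ x y : Esp d, |ρ x - ρ y| ≤ L * ‖x - y‖

/-- `ω` is `γ`-thick with respect to the density `ρ`. -/
def IsThick {d : ℕ} (γ : ℝ) (ρ : Esp d → ℝ) (ω : Set (Esp d)) : Prop :=
  ∀ x : Esp d, ENNReal.ofReal γ * volume (Metric.ball x (ρ x)) ≤
    volume (ω ∩ Metric.ball x (ρ x))

/-- The Bang degree `n_{t,M,r}`. -/
def bangDeg (M : ℕ → ℝ) (t r : ℝ) : ℕ :=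
  sSup {N : ℕ | (∑ n ∈ Finset.Icc 1 N, if -Real.log t < (n : ℝ) then M (n - 1) / M n else 0) < r}

/-- `γ_M(p) = sup_{1≤j≤p} j (M_{j+1}M_{j-1}/M_j² - 1)`. -/
def gammaM (M : ℕ → ℝ) (p : ℕ) : ℝ :=
  ⨆ j : {j : ℕ // 1 ≤ j ∧ j ≤ p}, (j : ℝ) * (M (j + 1) * M (j - 1) / (M j) ^ 2 - 1)

/-- `Γ_M(p) = 4 e^{4+4γ_M(p)}`. -/
def GammaM (M : ℕ → ℝ) (p : ℕ) : ℝ := 4 * Real.exp (4 + 4 * gammaM M p)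

/-- Quasi-analyticity: `∑_{p≥1} M_{p-1}/M_p = +∞`. -/
def QuasiAnalytic (M : ℕ → ℝ) : Prop :=
  Tendsto (fun N => ∑ p ∈ Finset.Icc 1 N, M (p - 1) / M p) atTop atTop

/-- The standard one-dimensional Hermite functions. -/
def hermite1 (k : ℕ) (x : ℝ) : ℝ :=
  ((-1 : ℝ) ^ k / Real.sqrt (2 ^ k * k.factorial * Real.sqrt Real.pi)) *
    Real.exp (x ^ 2 / 2) * iteratedDeriv k (fun y => Real.exp (-y ^ 2)) x

/-- The `d`-dimensional Hermite functions `Φ_α`. -/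
def hermiteFun {d : ℕ} (α : Fin d → ℕ) (x : Esp d) : ℝ :=
  ∏ j, hermite1 (α j) (x j)

/-- The Hermite coefficient `⟨f, Φ_α⟩_{L²(ℝ^d)}`. -/
def hermiteCoeff {d : ℕ} (f : Esp d → ℂ) (α : Fin d → ℕ) : ℂ :=
  ∫ x, f x * ((hermiteFun α x : ℝ) : ℂ)

/-- The set of values whose supremum defines `M_p = sup_{t ≥ 0} t^p e^{-Θ(t)}`. -/
def MseqSet (Θ : ℝ → ℝ) (p : ℕ) : Set ℝ :=
  {y : ℝ | ∃ t : ℝ, 0 ≤ t ∧ y = t ^ p * Real.exp (-Θ t)}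

/-- The sequence `M_p = sup_{t ≥ 0} t^p e^{-Θ(t)}` associated with `Θ`. -/
def Mseq (Θ : ℝ → ℝ) (p : ℕ) : ℝ := sSup (MseqSet Θ p)

/-- The square of the norm of the weighted Gelfand–Shilov space `GS_Θ`,
`‖f‖²_{GS_Θ} = ∑_α e^{2Θ(|α|)} |⟨f,Φ_α⟩|²`. -/
def GSThetaNormSq {d : ℕ} (Θ : ℝ → ℝ) (f : Esp d → ℂ) : ℝ≥0∞ :=
  ∑' α : Fin d → ℕ,
    ENNReal.ofReal (Real.exp (2 * Θ ((∑ i, α i : ℕ) : ℝ)) * ‖hermiteCoeff f α‖ ^ 2)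

/-! With `m(x) = sup_{t > 0} (x log t - Θ t)`, a supremum of affine functions and hence convex,
one has `log M^Θ_n = m(n)` for `n ≥ 1` and `log M^{TΘ+c}_p = T m(p / T) - c`. The constant `c`
cancels in the ratios `M_p / M_{p+1}`, and monotonicity of the slopes of `m` gives
`M^Θ_n / M^Θ_{n+1} ≤ M^{TΘ+c}_p / M^{TΘ+c}_{p+1}` whenever `p + 1 ≤ T n`; for `T = 1` this says
that the ratios of `M^Θ` decrease. Taking `n = K (p + 1)` with `K = ⌈1/T⌉`, Schlömilch's
condensation test carries the divergence of `∑ M^Θ_n / M^Θ_{n+1}` over to `M^{TΘ+c}`. -/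

open Real
open scoped Pointwise

section Mseq

variable {φ : ℝ → ℝ} {p : ℕ}

lemma pow_mul_exp_le_Mseq (hb : BddAbove (MseqSet φ p)) {t : ℝ} (ht : 0 ≤ t) :
    t ^ p * exp (-φ t) ≤ Mseq φ p :=
  le_csSup hb ⟨t, ht, rfl⟩

lemma Mseq_pos (hb : BddAbove (MseqSet φ p)) : 0 < Mseq φ p :=
  (by positivity : (0 : ℝ) < 1 ^ p * exp (-φ 1)).trans_le (pow_mul_exp_le_Mseq hb zero_le_one)

lemma mul_log_sub_le_log_Mseq (hb : BddAbove (MseqSet φ p)) {t : ℝ} (ht : 0 < t) :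
    p * log t - φ t ≤ log (Mseq φ p) := by
  have h := log_le_log (by positivity) (pow_mul_exp_le_Mseq hb ht.le)
  rwa [log_mul (by positivity) (exp_ne_zero _), log_pow, log_exp, ← sub_eq_add_neg] at h

lemma Mseq_le_of_forall_pos (hp : p ≠ 0) {C : ℝ} (hC : 0 ≤ C)
    (h : ∀ t, 0 < t → t ^ p * exp (-φ t) ≤ C) : Mseq φ p ≤ C := by
  refine csSup_le ⟨_, 0, le_rfl, rfl⟩ ?_
  rintro _ ⟨t, ht, rfl⟩
  rcases ht.eq_or_lt with rfl | ht
  · simpa [zero_pow hp] using hC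
  · exact h t ht

lemma Mseq_mul_Mseq_le {ψ : ℝ → ℝ} {q : ℕ} (hp : p ≠ 0) (hq : q ≠ 0) (hψ : 0 < Mseq ψ q)
    {C : ℝ} (hC : 0 ≤ C)
    (h : ∀ u v, 0 < u → 0 < v → u ^ p * exp (-φ u) * (v ^ q * exp (-ψ v)) ≤ C) :
    Mseq φ p * Mseq ψ q ≤ C := by
  rw [← le_div_iff₀ hψ]
  refine Mseq_le_of_forall_pos hp (by positivity) fun u hu => ?_
  rw [le_div_iff₀ hψ, mul_comm, ← le_div_iff₀ (by positivity)]
  refine Mseq_le_of_forall_pos hq (by positivity) fun v hv => ?_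
  rw [le_div_iff₀ (by positivity), mul_comm]
  exact h u v hu hv

lemma MseqSet_add_const (c : ℝ) :
    MseqSet (fun t => φ t + c) p = exp (-c) • MseqSet φ p := by
  ext y
  simp only [MseqSet, Set.mem_smul_set, Set.mem_ofPred_eq, smul_eq_mul]
  constructor
  · rintro ⟨t, ht, rfl⟩
    exact ⟨_, ⟨t, ht, rfl⟩, by rw [neg_add, exp_add]; ring⟩
  · rintro ⟨_, ⟨t, ht, rfl⟩, rfl⟩
    exact ⟨t, ht, by rw [neg_add, exp_add]; ring⟩

lemma Mseq_add_const (c : ℝ) : Mseq (fun t => φ t + c) p = exp (-c) * Mseq φ p := by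
  rw [Mseq, MseqSet_add_const, Real.sSup_smul_of_nonneg (exp_pos _).le, Mseq, smul_eq_mul]

end Mseq

section QuasiAnalytic

variable {M : ℕ → ℝ}

lemma quasiAnalytic_const_mul_iff {a : ℝ} (ha : a ≠ 0) :
    QuasiAnalytic (fun p => a * M p) ↔ QuasiAnalytic M := by
  simp only [QuasiAnalytic, mul_div_mul_left _ _ ha]

lemma quasiAnalytic_iff_not_summable (hM : ∀ p, 0 ≤ M p) :
    QuasiAnalytic M ↔ ¬Summable fun p => M p / M (p + 1) := by
  have hsum (N : ℕ) : ∑ p ∈ Finset.Icc 1 N, M (p - 1) / M p =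
      ∑ p ∈ Finset.range N, M p / M (p + 1) := by
    induction N with
    | zero => simp
    | succ N ih => rw [Finset.sum_Icc_succ_top (by omega), ih, Finset.sum_range_succ]; rfl
  rw [not_summable_iff_tendsto_nat_atTop_of_nonneg fun p => div_nonneg (hM p) (hM (p + 1)),
    QuasiAnalytic, funext hsum]

end QuasiAnalytic

/-- Schlömilch's condensation test along the arithmetic progression `K (k + 1)`. -/
lemma not_summable_comp_mul {f : ℕ → ℝ} (hf₀ : ∀ n, 0 ≤ f n)
    (hf : ∀ ⦃m n⦄, 0 < m → m ≤ n → f n ≤ f m) {K : ℕ} (hK : K ≠ 0) (h : ¬Summable f) :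
    ¬Summable fun k => f (K * (k + 1)) := by
  have hu : StrictMono fun k => K * (k + 1) := fun a b hab => by
    have := Nat.pos_of_ne_zero hK; dsimp; nlinarith
  have hdiff : SuccDiffBounded 1 fun k => K * (k + 1) := fun k => by
    simp only [one_smul, mul_add]
    omega
  have hterm : (fun k => ((K * (k + 1 + 1) : ℕ) - (K * (k + 1) : ℕ) : ℝ) * f (K * (k + 1))) =
      fun k => K * f (K * (k + 1)) := by
    funext k; push_cast; ring
  rwa [← summable_schlomilch_iff_of_nonneg hf₀ hf (fun k => by positivity) hu one_ne_zero hdiff,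
    hterm, summable_mul_left_iff (Nat.cast_ne_zero.2 hK)] at h

section ConstMul

variable {Θ : ℝ → ℝ} {T : ℝ}

lemma bddAbove_MseqSet_const_mul (hT : 0 < T) (hb : ∀ p, BddAbove (MseqSet Θ p)) (p : ℕ) :
    BddAbove (MseqSet (fun t => T * Θ t) p) := by
  set q := ⌈p / T⌉₊
  have hpq : (p : ℝ) ≤ q * T := (div_le_iff₀ hT).1 (Nat.le_ceil _)
  refine ⟨max (Mseq Θ 0) (Mseq Θ q) ^ T, ?_⟩
  rintro _ ⟨t, ht, rfl⟩
  have hmax : max 1 t ^ q * exp (-Θ t) ≤ max (Mseq Θ 0) (Mseq Θ q) := by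
    rcases le_total t 1 with h | h
    · simpa [max_eq_left h] using le_max_of_le_left (pow_mul_exp_le_Mseq (hb 0) ht)
    · simpa [max_eq_right h] using le_max_of_le_right (pow_mul_exp_le_Mseq (hb q) ht)
  calc t ^ p * exp (-(T * Θ t))
      ≤ max 1 t ^ ((q : ℝ) * T) * exp (-Θ t) ^ T := by
        rw [← exp_mul, ← rpow_natCast]
        gcongr
        · exact (rpow_le_rpow ht (le_max_right 1 t) (Nat.cast_nonneg p)).trans
            (rpow_le_rpow_of_exponent_le (le_max_left 1 t) hpq)
        · linarith
    _ = (max 1 t ^ q * exp (-Θ t)) ^ T := by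
        rw [mul_rpow (by positivity) (exp_pos _).le, rpow_mul (by positivity), rpow_natCast]
    _ ≤ max (Mseq Θ 0) (Mseq Θ q) ^ T := by gcongr

/-- Both sides are logarithms of products of the four bounds `t ^ p e^{-TΘ t} ≤ M^{TΘ}_p` and
`t ^ (n + 1) e^{-Θ t} ≤ M^Θ_{n+1}` at `t = u, v`, taken with weights `A - 1, 1, T, A - T` where
`A = (n + 1) T - p`; this is the convexity of `x ↦ log M^Θ_x` in disguise. -/
lemma pow_mul_exp_mul_pow_mul_exp_le (hb : ∀ p, BddAbove (MseqSet Θ p)) (hT : 0 < T) {p n : ℕ}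
    (hpn : (p + 1 : ℝ) ≤ T * n) {u v : ℝ} (hu : 0 < u) (hv : 0 < v) :
    u ^ (p + 1) * exp (-(T * Θ u)) * (v ^ n * exp (-Θ v)) ≤
      Mseq (fun t => T * Θ t) p * Mseq Θ (n + 1) := by
  have hbT := bddAbove_MseqSet_const_mul hT hb
  have hXu := mul_log_sub_le_log_Mseq (hbT p) hu
  have hXv := mul_log_sub_le_log_Mseq (hbT p) hv
  have hZu := mul_log_sub_le_log_Mseq (hb (n + 1)) hu
  have hZv := mul_log_sub_le_log_Mseq (hb (n + 1)) hv
  push_cast at hXu hXv hZu hZv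
  rw [← exp_log (by positivity : 0 < u ^ (p + 1) * exp (-(T * Θ u)) * (v ^ n * exp (-Θ v))),
    ← exp_log (mul_pos (Mseq_pos (hbT p)) (Mseq_pos (hb (n + 1)))), exp_le_exp,
    log_mul (by positivity) (by positivity), log_mul (by positivity) (by positivity),
    log_mul (by positivity) (by positivity), log_mul (Mseq_pos (hbT p)).ne' (Mseq_pos (hb _)).ne',
    log_pow, log_pow, log_exp, log_exp]
  push_cast
  have hw : 0 ≤ (n + 1) * T - p - 1 := by linarith
  have hw' : 0 ≤ n * T - p := by linarith
  refine le_of_mul_le_mul_left ?_ (by linarith : 0 < (n + 1) * T - p)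
  linear_combination ((n + 1) * T - p - 1) * hXu + hXv + T * hZu + (n * T - p) * hZv

lemma Mseq_div_le_Mseq_const_mul_div (hb : ∀ p, BddAbove (MseqSet Θ p)) (hT : 0 < T) {p n : ℕ}
    (hpn : (p + 1 : ℝ) ≤ T * n) :
    Mseq Θ n / Mseq Θ (n + 1) ≤
      Mseq (fun t => T * Θ t) p / Mseq (fun t => T * Θ t) (p + 1) := by
  have hbT := bddAbove_MseqSet_const_mul hT hb
  have hn : n ≠ 0 := by rintro rfl; push_cast at hpn; linarith
  rw [div_le_div_iff₀ (Mseq_pos (hb _)) (Mseq_pos (hbT _)), mul_comm]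
  exact Mseq_mul_Mseq_le p.succ_ne_zero hn (Mseq_pos (hb n))
    (mul_pos (Mseq_pos (hbT p)) (Mseq_pos (hb _))).le
    fun u v hu hv => pow_mul_exp_mul_pow_mul_exp_le hb hT hpn hu hv

lemma antitone_Mseq_div_Mseq_succ (hb : ∀ p, BddAbove (MseqSet Θ p)) :
    Antitone fun n => Mseq Θ n / Mseq Θ (n + 1) := by
  refine antitone_nat_of_succ_le fun n => ?_
  have h := Mseq_div_le_Mseq_const_mul_div hb one_pos (p := n) (n := n + 1) (by push_cast; linarith)
  simpa only [one_mul] using h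

theorem QuasiAnalytic.Mseq_const_mul (hT : 0 < T) (hb : ∀ p, BddAbove (MseqSet Θ p))
    (hqa : QuasiAnalytic (Mseq Θ)) :
    QuasiAnalytic (Mseq fun t => T * Θ t) := by
  have hbT := bddAbove_MseqSet_const_mul hT hb
  have hratio_nonneg (n : ℕ) : 0 ≤ Mseq Θ n / Mseq Θ (n + 1) :=
    (div_pos (Mseq_pos (hb _)) (Mseq_pos (hb _))).le
  rw [quasiAnalytic_iff_not_summable fun p => (Mseq_pos (hb p)).le] at hqa
  rw [quasiAnalytic_iff_not_summable fun p => (Mseq_pos (hbT p)).le]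
  set K := ⌈T⁻¹⌉₊
  have hK : 1 ≤ T * K := (inv_le_iff_one_le_mul₀' hT).1 (Nat.le_ceil _)
  refine fun hs => not_summable_comp_mul hratio_nonneg
    (fun m n _ h => antitone_Mseq_div_Mseq_succ hb h) (Nat.ceil_pos.2 (inv_pos.2 hT)).ne' hqa
    (hs.of_nonneg_of_le (fun n => hratio_nonneg _) fun p => ?_)
  refine Mseq_div_le_Mseq_const_mul_div hb hT ?_
  push_cast
  nlinarith

end ConstMul

theorem stmt_19_general (Θ : ℝ → ℝ)
    (hH1 : ∀ p : ℕ, BddAbove (MseqSet Θ p) ∧ 0 < Mseq Θ p)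
    (hqa : QuasiAnalytic (Mseq Θ))
    (T c : ℝ) (hT : 0 < T) :
    (∀ p : ℕ, BddAbove (MseqSet (fun t => T * Θ t + c) p) ∧
      0 < Mseq (fun t => T * Θ t + c) p) ∧
    QuasiAnalytic (Mseq (fun t => T * Θ t + c)) := by
  have hb p := (hH1 p).1
  have hbT := bddAbove_MseqSet_const_mul hT hb
  have hM : Mseq (fun t => T * Θ t + c) = fun p => exp (-c) * Mseq (fun t => T * Θ t) p :=
    funext fun p => Mseq_add_const c
  refine ⟨fun p => ⟨?_, ?_⟩, ?_⟩
  · rw [MseqSet_add_const]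
    exact (hbT p).smul_of_nonneg (exp_pos _).le
  · rw [hM]
    exact mul_pos (exp_pos _) (Mseq_pos (hbT p))
  · rw [hM, quasiAnalytic_const_mul_iff (exp_ne_zero _)]
    exact hqa.Mseq_const_mul hT hb

/-- Lemma `linearcomb` (Alphonse–Martin): quasi-analyticity of the sequence
associated with `TΘ + c`. -/
theorem stmt_19 (Θ : ℝ → ℝ) (hΘc : ContinuousOn Θ (Set.Ici 0))
    (hΘ0 : ∀ t : ℝ, 0 ≤ t → 0 ≤ Θ t)
    (hH1 : ∀ p : ℕ, BddAbove (MseqSet Θ p) ∧ 0 < Mseq Θ p)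
    (hqa : QuasiAnalytic (Mseq Θ))
    (T c : ℝ) (hT : 0 < T) (hc : 0 ≤ c) :
    (∀ p : ℕ, BddAbove (MseqSet (fun t => T * Θ t + c) p) ∧
      0 < Mseq (fun t => T * Θ t + c) p) ∧
    QuasiAnalytic (Mseq (fun t => T * Θ t + c)) :=
  stmt_19_general Θ hH1 hqa T c hT
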